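/- Let (M_n)_{n∈ℕ} be a decreasing sequence of positive reals with M_n → 0, K* = { irrational x ∈ ℝ : Σ_{k≥n} (log a_{k+1}(x))/q_k(x) ≤ M_n for all n ∈ ℕ }, and A* = ℝ ∖ K*. Let (α⁻, α⁺) be a bounded connected component of the open set A*. Then there is exactly one rational number in (α⁻, α⁺) that is a convergent of both α⁻ and α⁺; moreover this common convergent is the rational of strictly least reduced denominator in (α⁻, α⁺) (its pseudocenter). -/

import Mathlib

open scoped ENNReal Topology

noncomputable def gaussIter (x : ℝ) : ℕ → ℝ
  | 0 => Int.fract x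
  | n + 1 => Int.fract (gaussIter x n)⁻¹

noncomputable def pquot (x : ℝ) : ℕ → ℤ
  | 0 => ⌊x⌋
  | n + 1 => ⌊(gaussIter x n)⁻¹⌋

noncomputable def qden (x : ℝ) : ℕ → ℤ
  | 0 => 1
  | 1 => pquot x 1
  | n + 2 => pquot x (n + 2) * qden x (n + 1) + qden x n

noncomputable def pnum (x : ℝ) : ℕ → ℤ
  | 0 => pquot x 0
  | 1 => pquot x 1 * pquot x 0 + 1
  | n + 2 => pquot x (n + 2) * pnum x (n + 1) + pnum x n

noncomputable def brjunoTerm (x : ℝ) (k : ℕ) : ℝ :=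
  Real.log (pquot x (k + 1)) / (qden x k : ℝ)

open Classical in
noncomputable def brjuno (x : ℝ) : ℝ≥0∞ :=
  if Irrational x then ∑' k, ENNReal.ofReal (brjunoTerm x k) else ⊤

noncomputable def brjunoTailE (x : ℝ) (n : ℕ) : ℝ≥0∞ :=
  ∑' k, ENNReal.ofReal (brjunoTerm x (n + k))

noncomputable def cfLen (x : ℝ) : ℕ := sInf {n | gaussIter x n = 0}

noncomputable def brjunoFinite (x : ℝ) : ℝ :=
  ∑ k ∈ Finset.range (cfLen x), Real.log (pquot x (k + 1)) / (qden x k : ℝ)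

def brjunoSuper (t : ℝ) : Set ℝ := {x | ENNReal.ofReal t < brjuno x}

def IsCompOf (A : Set ℝ) (a b : ℝ) : Prop := ∃ x ∈ A, connectedComponentIn A x = Set.Ioo a b

def diamond (κ a b : ℝ) : Set ℂ :=
  {z : ℂ | a < z.re ∧ z.re < b ∧ |z.im| ≤ κ * min (z.re - a) (b - z.re)}

noncomputable def CMset (κ M : ℝ) : Set ℂ :=
  (fun ξ : ℂ => Complex.exp (2 * Real.pi * Complex.I * ξ)) ''
    (⋃ (a : ℝ) (b : ℝ) (_ : IsCompOf (brjunoSuper M) a b), diamond κ a b)ᶜ ∪ {0}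

def KstarR (Ms : ℕ → ℝ) : Set ℝ :=
  {x | Irrational x ∧ ∀ n, brjunoTailE x n ≤ ENNReal.ofReal (Ms n)}

noncomputable def CstarSet (κ : ℝ) (Ms : ℕ → ℝ) : Set ℂ :=
  (fun ξ : ℂ => Complex.exp (2 * Real.pi * Complex.I * ξ)) ''
    (⋃ (a : ℝ) (b : ℝ) (_ : IsCompOf (KstarR Ms)ᶜ a b), diamond κ a b)ᶜ ∪ {0}

/-!
Let `N` be the first index at which the partial quotients of the two endpoints `b₁, b₂` of the gap
differ, say `a_N(b₁) < a_N(b₂)`. Both endpoints are images of their complete quotients `x_N` under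
the same Möbius map `t ↦ [a₀; …, a_{N-1}, t]`, so every `t` strictly between `x_N(b₁)` and
`x_N(b₂)` is sent into the gap. A point whose expansion continues with `1, 1, 1, …` after index `N`
has Brjuno tails dominated by those of an endpoint, hence lies in `K*`; since no such point lies in
the gap, `a_N(b₂) = a_N(b₁) + 1` and `a_{N+1}(b₁) = 1`. Then `[a₀; …, a_{N-1}, a_N(b₂)]` is a
convergent of both endpoints lying in the gap. Finally, a rational strictly between an irrational
`x` and a convergent `p_n / q_n` of `x` has denominator larger than `q_n`, so a common convergent
has strictly smaller denominator than every other rational of the gap; in particular it is unique.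
-/

/-- The complete quotients `x_k = [a_k; a_{k+1}, …]`. -/
noncomputable def complQuot (x : ℝ) : ℕ → ℝ
  | 0 => x
  | k + 1 => (gaussIter x k)⁻¹

section CompleteQuotients

variable {x : ℝ}

theorem pquot_eq_floor_complQuot (x : ℝ) : ∀ k, pquot x k = ⌊complQuot x k⌋
  | 0 => rfl
  | _ + 1 => rfl

theorem gaussIter_eq_fract_complQuot (x : ℝ) : ∀ k, gaussIter x k = Int.fract (complQuot x k)
  | 0 => rfl
  | _ + 1 => rfl

theorem complQuot_succ (x : ℝ) (k : ℕ) :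
    complQuot x (k + 1) = (Int.fract (complQuot x k))⁻¹ := by
  rw [← gaussIter_eq_fract_complQuot]; rfl

theorem irrational_complQuot (hx : Irrational x) : ∀ k, Irrational (complQuot x k)
  | 0 => hx
  | k + 1 => by
    rw [complQuot_succ, Int.fract]
    exact ((irrational_complQuot hx k).sub_intCast _).inv

theorem Irrational.of_complQuot {k : ℕ} (h : Irrational (complQuot x k)) : Irrational x := by
  induction k with
  | zero => exact h
  | succ k ih =>
    rw [complQuot_succ] at h
    apply ih
    rw [← Int.floor_add_fract (complQuot x k)]
    simpa using h.inv.intCast_add ⌊complQuot x k⌋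

theorem fract_complQuot_pos (hx : Irrational x) (k : ℕ) : 0 < Int.fract (complQuot x k) :=
  (Int.fract_nonneg _).lt_of_ne fun h => (irrational_complQuot hx k).ne_int ⌊complQuot x k⌋
    (by linarith [Int.floor_add_fract (complQuot x k)])

theorem one_lt_complQuot_succ (hx : Irrational x) (k : ℕ) : 1 < complQuot x (k + 1) := by
  rw [complQuot_succ]
  exact one_lt_inv_iff₀.mpr ⟨fract_complQuot_pos hx k, Int.fract_lt_one _⟩

theorem one_lt_complQuot (hx : Irrational x) {k : ℕ} (hk : k ≠ 0) : 1 < complQuot x k := by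
  obtain ⟨j, rfl⟩ := Nat.exists_eq_succ_of_ne_zero hk
  exact one_lt_complQuot_succ hx j

theorem pquot_lt_complQuot (hx : Irrational x) (k : ℕ) : (pquot x k : ℝ) < complQuot x k := by
  rw [pquot_eq_floor_complQuot]
  linarith [Int.floor_add_fract (complQuot x k), fract_complQuot_pos hx k]

theorem complQuot_lt_pquot_add_one (x : ℝ) (k : ℕ) : complQuot x k < pquot x k + 1 := by
  rw [pquot_eq_floor_complQuot]
  exact Int.lt_floor_add_one _

theorem one_le_pquot_succ (hx : Irrational x) (k : ℕ) : 1 ≤ pquot x (k + 1) := by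
  rw [pquot_eq_floor_complQuot]
  exact Int.le_floor.mpr (by exact_mod_cast (one_lt_complQuot_succ hx k).le)

theorem one_le_pquot (hx : Irrational x) {k : ℕ} (hk : k ≠ 0) : 1 ≤ pquot x k := by
  obtain ⟨j, rfl⟩ := Nat.exists_eq_succ_of_ne_zero hk
  exact one_le_pquot_succ hx j

theorem complQuot_eq_pquot_add_inv (x : ℝ) (k : ℕ) :
    complQuot x k = pquot x k + (complQuot x (k + 1))⁻¹ := by
  rw [complQuot_succ, inv_inv, pquot_eq_floor_complQuot, Int.floor_add_fract]

end CompleteQuotients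

/-- Shifted continuants: `cnum x (n + 2) = pnum x n` and `cden x (n + 2) = qden x n`, preceded
by `p₋₂ = 0, p₋₁ = 1` and `q₋₂ = 1, q₋₁ = 0`, so that one recursion holds from index `0` on. -/
noncomputable def cnum (x : ℝ) : ℕ → ℤ
  | 0 => 0
  | 1 => 1
  | n + 2 => pnum x n

noncomputable def cden (x : ℝ) : ℕ → ℤ
  | 0 => 1
  | 1 => 0
  | n + 2 => qden x n

section Continuants

variable {x y : ℝ}

theorem cnum_add_two (x : ℝ) (n : ℕ) : cnum x (n + 2) = pnum x n := rfl

theorem cden_add_two (x : ℝ) (n : ℕ) : cden x (n + 2) = qden x n := rfl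

theorem cnum_rec (x : ℝ) : ∀ k, cnum x (k + 2) = pquot x k * cnum x (k + 1) + cnum x k
  | 0 => by simp [cnum, pnum]
  | 1 => by simp [cnum, pnum]
  | _ + 2 => rfl

theorem cden_rec (x : ℝ) : ∀ k, cden x (k + 2) = pquot x k * cden x (k + 1) + cden x k
  | 0 => by simp [cden, qden]
  | 1 => by simp [cden, qden]
  | _ + 2 => rfl

theorem cnum_mul_cden_sub (x : ℝ) :
    ∀ k, cnum x (k + 1) * cden x k - cnum x k * cden x (k + 1) = (-1) ^ k
  | 0 => by simp [cnum, cden]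
  | k + 1 => by
    rw [cnum_rec, cden_rec]
    linear_combination (-1 : ℤ) * cnum_mul_cden_sub x k

theorem pnum_succ_mul_qden_sub (x : ℝ) (n : ℕ) :
    pnum x (n + 1) * qden x n - pnum x n * qden x (n + 1) = (-1) ^ n := by
  rw [show (-1 : ℤ) ^ n = (-1) ^ (n + 2) by ring]
  exact cnum_mul_cden_sub x (n + 2)

theorem one_le_qden (hx : Irrational x) : ∀ n, 1 ≤ qden x n
  | 0 => le_rfl
  | 1 => one_le_pquot_succ hx 0
  | n + 2 => by
    have := one_le_pquot_succ hx (n + 1)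
    have := one_le_qden hx n
    have := one_le_qden hx (n + 1)
    show 1 ≤ pquot x (n + 2) * qden x (n + 1) + qden x n
    nlinarith

theorem qden_pos (hx : Irrational x) (n : ℕ) : 0 < qden x n :=
  (one_le_qden hx n).trans_lt' zero_lt_one

theorem le_qden (hx : Irrational x) : ∀ n : ℕ, (n : ℤ) ≤ qden x n
  | 0 => zero_le_one
  | 1 => one_le_pquot_succ hx 0
  | n + 2 => by
    have := one_le_pquot_succ hx (n + 1)
    have := one_le_qden hx n
    have := le_qden hx (n + 1)
    show ((n + 2 : ℕ) : ℤ) ≤ pquot x (n + 2) * qden x (n + 1) + qden x n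
    push_cast at *
    nlinarith

theorem cden_nonneg (hx : Irrational x) : ∀ k, 0 ≤ cden x k
  | 0 => zero_le_one
  | 1 => le_rfl
  | n + 2 => zero_le_one.trans (one_le_qden hx n)

theorem cnum_congr {k : ℕ} (h : ∀ i < k, pquot x i = pquot y i) :
    ∀ j ≤ k + 1, cnum x j = cnum y j
  | 0, _ => rfl
  | 1, _ => rfl
  | j + 2, hj => by
    rw [cnum_rec, cnum_rec, h j (by omega), cnum_congr h (j + 1) (by omega),
      cnum_congr h j (by omega)]

theorem cden_congr {k : ℕ} (h : ∀ i < k, pquot x i = pquot y i) :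
    ∀ j ≤ k + 1, cden x j = cden y j
  | 0, _ => rfl
  | 1, _ => rfl
  | j + 2, hj => by
    rw [cden_rec, cden_rec, h j (by omega), cden_congr h (j + 1) (by omega),
      cden_congr h j (by omega)]

end Continuants

/-- The Möbius map `t ↦ [a₀; a₁, …, a_{k-1}, t]`. -/
noncomputable def mob (x : ℝ) (k : ℕ) (t : ℝ) : ℝ :=
  (cnum x (k + 1) * t + cnum x k) / (cden x (k + 1) * t + cden x k)

section Mobius

variable {x y : ℝ}

theorem mob_zero (x t : ℝ) : mob x 0 t = t := by
  simp [mob, cnum, cden]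

theorem mob_succ (x : ℝ) (k : ℕ) {t : ℝ} (ht : t ≠ 0) :
    mob x (k + 1) t = mob x k (pquot x k + t⁻¹) := by
  simp only [mob, cnum_rec, cden_rec]
  conv_rhs => rw [← mul_div_mul_right _ _ ht]
  push_cast
  congr 1 <;> field_simp <;> ring

theorem mob_complQuot (hx : Irrational x) : ∀ k, mob x k (complQuot x k) = x
  | 0 => mob_zero x x
  | k + 1 => by
    rw [mob_succ x k (zero_lt_one.trans (one_lt_complQuot_succ hx k)).ne',
      ← complQuot_eq_pquot_add_inv, mob_complQuot hx k]

theorem mob_pquot (x : ℝ) (n : ℕ) : mob x n (pquot x n) = pnum x n / qden x n := by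
  rw [mob, ← cnum_add_two, ← cden_add_two, cnum_rec, cden_rec]
  push_cast
  ring_nf

theorem mob_congr {k : ℕ} (h : ∀ i < k, pquot x i = pquot y i) : mob x k = mob y k := by
  ext t
  simp only [mob, cnum_congr h k (by omega), cnum_congr h (k + 1) le_rfl,
    cden_congr h k (by omega), cden_congr h (k + 1) le_rfl]

theorem mob_den_pos (hx : Irrational x) {k : ℕ} {t : ℝ} (ht : k ≠ 0 → 0 < t) :
    0 < (cden x (k + 1) : ℝ) * t + cden x k := by
  rcases k with _ | n
  · simp [cden]
  · have h1 : (1 : ℝ) ≤ qden x n := by exact_mod_cast one_le_qden hx n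
    have h0 : (0 : ℝ) ≤ cden x (n + 1) := by exact_mod_cast cden_nonneg hx (n + 1)
    have := ht n.succ_ne_zero
    show 0 < (qden x n : ℝ) * t + cden x (n + 1)
    nlinarith

theorem mob_sub_mob (x : ℝ) (k : ℕ) {s t : ℝ} (hs : (cden x (k + 1) : ℝ) * s + cden x k ≠ 0)
    (ht : (cden x (k + 1) : ℝ) * t + cden x k ≠ 0) :
    mob x k t - mob x k s = (-1) ^ k * (t - s) /
      (((cden x (k + 1) : ℝ) * t + cden x k) * ((cden x (k + 1) : ℝ) * s + cden x k)) := by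
  have hdet : (cnum x (k + 1) : ℝ) * cden x k - cnum x k * cden x (k + 1) = (-1) ^ k := by
    exact_mod_cast cnum_mul_cden_sub x k
  rw [mob, mob, div_sub_div _ _ ht hs]
  congr 1
  linear_combination (t - s) * hdet

theorem mob_mem_uIoo (hx : Irrational x) {k : ℕ} {s₁ s₂ t : ℝ} (hs₁ : k ≠ 0 → 0 < s₁)
    (ht : t ∈ Set.Ioo s₁ s₂) : mob x k t ∈ Set.uIoo (mob x k s₁) (mob x k s₂) := by
  have hD₁ := mob_den_pos hx hs₁
  have hDt := mob_den_pos hx fun hk => (hs₁ hk).trans ht.1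
  have hD₂ := mob_den_pos hx fun hk => (hs₁ hk).trans (ht.1.trans ht.2)
  have h₁ := mob_sub_mob x k hD₁.ne' hDt.ne'
  have h₂ := mob_sub_mob x k hDt.ne' hD₂.ne'
  have hp₁ : 0 < (t - s₁) / (((cden x (k + 1) : ℝ) * t + cden x k) *
      ((cden x (k + 1) : ℝ) * s₁ + cden x k)) := by have := sub_pos.2 ht.1; positivity
  have hp₂ : 0 < (s₂ - t) / (((cden x (k + 1) : ℝ) * s₂ + cden x k) *
      ((cden x (k + 1) : ℝ) * t + cden x k)) := by have := sub_pos.2 ht.2; positivity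
  rw [mul_div_assoc] at h₁ h₂
  rcases neg_one_pow_eq_or ℝ k with hε | hε <;> rw [hε] at h₁ h₂
  · exact Set.mem_uIoo_of_lt (by linarith) (by linarith)
  · exact Set.mem_uIoo_of_gt (by linarith) (by linarith)

theorem complQuot_mob (hx : Irrational x) :
    ∀ (k : ℕ) {t : ℝ}, (k ≠ 0 → 1 < t) →
      complQuot (mob x k t) k = t ∧ ∀ i < k, pquot (mob x k t) i = pquot x i
  | 0, t, _ => ⟨mob_zero x t, fun _ h => absurd h (Nat.not_lt_zero _)⟩
  | k + 1, t, ht => by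
    have ht1 := ht k.succ_ne_zero
    have hinv : t⁻¹ ∈ Set.Ico (0 : ℝ) 1 := ⟨by positivity, inv_lt_one_of_one_lt₀ ht1⟩
    have hfloor : ⌊(pquot x k : ℝ) + t⁻¹⌋ = pquot x k := by
      rw [Int.floor_intCast_add, Int.floor_eq_zero_iff.mpr hinv, add_zero]
    have hfract : Int.fract ((pquot x k : ℝ) + t⁻¹) = t⁻¹ := by
      rw [Int.fract_intCast_add, Int.fract_eq_self.mpr hinv]
    have ht' : k ≠ 0 → 1 < (pquot x k : ℝ) + t⁻¹ := fun hk => by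
      obtain ⟨j, rfl⟩ := Nat.exists_eq_succ_of_ne_zero hk
      have : (1 : ℝ) ≤ pquot x (j + 1) := by exact_mod_cast one_le_pquot_succ hx j
      linarith [hinv.1.lt_of_ne (inv_ne_zero (by positivity)).symm]
    obtain ⟨hk, hpre⟩ := complQuot_mob hx k ht'
    rw [mob_succ x k (by positivity)]
    refine ⟨by rw [complQuot_succ, hk, hfract, inv_inv], fun i hi => ?_⟩
    rcases (Nat.lt_succ_iff.mp hi).lt_or_eq with hi | rfl
    · exact hpre i hi
    · rw [pquot_eq_floor_complQuot, hk, hfloor]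

theorem eq_of_forall_pquot_eq (hx : Irrational x) (hy : Irrational y)
    (h : ∀ k, pquot x k = pquot y k) : x = y := by
  by_contra hne
  have hxy : 0 < |x - y| := abs_pos.mpr (sub_ne_zero.mpr hne)
  obtain ⟨n, hn⟩ := exists_nat_gt (1 / |x - y|)
  have hn' : 1 < n * |x - y| := by rwa [div_lt_iff₀ hxy] at hn
  have hqn : (n : ℝ) ≤ qden x n := by exact_mod_cast le_qden hx n
  have hc : (0 : ℝ) ≤ cden x (n + 1) := by exact_mod_cast cden_nonneg hx (n + 1)
  have hgx := one_lt_complQuot_succ hx n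
  have hgy := one_lt_complQuot_succ hy n
  have hDx := mob_den_pos hx (k := n + 1) fun _ => zero_lt_one.trans hgx
  have hDy := mob_den_pos hx (k := n + 1) fun _ => zero_lt_one.trans hgy
  have hsub := mob_sub_mob x (n + 1) hDy.ne' hDx.ne'
  rw [mob_complQuot hx, mob_congr fun i _ => h i, mob_complQuot hy, cden_add_two] at hsub
  rw [cden_add_two] at hDx hDy
  have hgap : |complQuot x (n + 1) - complQuot y (n + 1)| < 1 := by
    have := pquot_lt_complQuot hx (n + 1)
    have := pquot_lt_complQuot hy (n + 1)
    have := complQuot_lt_pquot_add_one x (n + 1)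
    have := complQuot_lt_pquot_add_one y (n + 1)
    rw [h] at *
    rw [abs_sub_lt_iff]; constructor <;> linarith
  have hkey : |x - y| * ((qden x n * complQuot x (n + 1) + cden x (n + 1)) *
      (qden x n * complQuot y (n + 1) + cden x (n + 1))) < 1 := by
    rw [hsub, abs_div, abs_mul, abs_pow, abs_neg, abs_one, one_pow, one_mul,
      abs_of_pos (mul_pos hDx hDy), div_mul_cancel₀ _ (mul_pos hDx hDy).ne']
    exact hgap
  have hq1 : (1 : ℝ) ≤ qden x n := by exact_mod_cast one_le_qden hx n
  have hDxn : (n : ℝ) ≤ qden x n * complQuot x (n + 1) + cden x (n + 1) := by nlinarith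
  have hDy1 : (1 : ℝ) ≤ qden x n * complQuot y (n + 1) + cden x (n + 1) := by nlinarith
  nlinarith [mul_le_mul_of_nonneg_right hDxn hxy.le,
    mul_le_mul_of_nonneg_left hDy1 (mul_nonneg hDx.le hxy.le)]

end Mobius

theorem Rat.add_le_den_of_mem_Ioo {a b c d : ℤ} (hb : 0 < b) (hd : 0 < d)
    (hdet : c * b - a * d = 1) {s : ℚ} (hs : s ∈ Set.Ioo (a / b : ℚ) (c / d)) :
    b + d ≤ s.den := by
  have hv : (0 : ℚ) < s.den := by exact_mod_cast s.pos
  obtain ⟨h₁, h₂⟩ := hs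
  rw [← Rat.num_div_den s, div_lt_div_iff₀ (by exact_mod_cast hb) hv] at h₁
  rw [← Rat.num_div_den s, div_lt_div_iff₀ hv (by exact_mod_cast hd)] at h₂
  have h₁ : a * s.den < s.num * b := by exact_mod_cast h₁
  have h₂ : s.num * d < c * s.den := by exact_mod_cast h₂
  nlinarith

section Convergents

variable {x : ℝ}

theorem sub_pnum_div_qden (hx : Irrational x) (n : ℕ) :
    x - pnum x n / qden x n =
      (-1) ^ n / (qden x n * (qden x n * complQuot x (n + 1) + cden x (n + 1))) := by
  have hq : (0 : ℝ) < qden x n := by exact_mod_cast qden_pos hx n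
  have hD := mob_den_pos hx (k := n + 1) fun _ => zero_lt_one.trans (one_lt_complQuot_succ hx n)
  have hdet : (pnum x n : ℝ) * cden x (n + 1) - cnum x (n + 1) * qden x n = (-1) ^ (n + 1) := by
    exact_mod_cast cnum_mul_cden_sub x (n + 1)
  nth_rw 1 [← mob_complQuot hx (n + 1)]
  rw [mob, div_sub_div _ _ hD.ne' hq.ne', cnum_add_two, cden_add_two]
  congr 1
  · linear_combination -hdet
  · ring

theorem neg_one_pow_mul_sub_pnum_div_qden_pos (hx : Irrational x) (n : ℕ) :
    0 < (-1) ^ n * (x - pnum x n / qden x n) := by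
  have : (0 : ℝ) < qden x n := by exact_mod_cast qden_pos hx n
  have hD := mob_den_pos hx (k := n + 1) fun _ => zero_lt_one.trans (one_lt_complQuot_succ hx n)
  rw [cden_add_two] at hD
  rw [sub_pnum_div_qden hx n, mul_div_assoc', ← mul_pow, neg_one_mul, neg_neg, one_pow]
  positivity

theorem pnum_div_qden_lt (hx : Irrational x) {n : ℕ} (hn : Even n) :
    (pnum x n / qden x n : ℝ) < x := by
  have := neg_one_pow_mul_sub_pnum_div_qden_pos hx n
  rw [hn.neg_one_pow, one_mul] at this
  linarith

theorem lt_pnum_div_qden (hx : Irrational x) {n : ℕ} (hn : Odd n) :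
    x < pnum x n / qden x n := by
  have := neg_one_pow_mul_sub_pnum_div_qden_pos hx n
  rw [hn.neg_one_pow, neg_one_mul] at this
  linarith

theorem isCoprime_pnum_qden (x : ℝ) (n : ℕ) : IsCoprime (pnum x n) (qden x n) := by
  have h := pnum_succ_mul_qden_sub x n
  rcases neg_one_pow_eq_or ℤ n with hε | hε <;> rw [hε] at h
  · exact ⟨-qden x (n + 1), pnum x (n + 1), by linear_combination h⟩
  · exact ⟨qden x (n + 1), -pnum x (n + 1), by linear_combination -h⟩

theorem den_eq_qden_of_eq (hx : Irrational x) {n : ℕ} {r : ℚ}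
    (h : (r : ℝ) = pnum x n / qden x n) : (r.den : ℤ) = qden x n := by
  have hr : r = pnum x n / qden x n := by exact_mod_cast h
  rw [hr]
  exact Rat.den_div_eq_of_coprime (qden_pos hx n)
    (Int.isCoprime_iff_gcd_eq_one.mp (isCoprime_pnum_qden x n))

/-- `p_n / q_n` and `p_{n+1} / q_{n+1}` are Farey neighbours on either side of `x`. -/
theorem qden_lt_den_of_mem_uIoo (hx : Irrational x) {n : ℕ} {s : ℚ}
    (hs : (s : ℝ) ∈ Set.uIoo x (pnum x n / qden x n)) : qden x n < s.den := by
  have hq₀ := one_le_qden hx n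
  have hq₁ := one_le_qden hx (n + 1)
  have hdet := pnum_succ_mul_qden_sub x n
  rcases Nat.even_or_odd n with hn | hn
  · have h₁ := pnum_div_qden_lt hx hn
    have h₂ := lt_pnum_div_qden hx hn.add_one
    rw [hn.neg_one_pow] at hdet
    rw [Set.uIoo_comm, Set.uIoo_of_lt h₁] at hs
    have := Rat.add_le_den_of_mem_Ioo (by omega) (by omega) hdet (s := s)
      ⟨by exact_mod_cast hs.1, by exact_mod_cast hs.2.trans h₂⟩
    omega
  · have h₁ := lt_pnum_div_qden hx hn
    have h₂ := pnum_div_qden_lt hx hn.add_one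
    rw [hn.neg_one_pow] at hdet
    rw [Set.uIoo_of_lt h₁] at hs
    have := Rat.add_le_den_of_mem_Ioo (a := pnum x (n + 1)) (b := qden x (n + 1)) (c := pnum x n)
      (d := qden x n) (by omega) (by omega) (by linear_combination -hdet) (s := s)
      ⟨by exact_mod_cast h₂.trans hs.1, by exact_mod_cast hs.2⟩
    omega

end Convergents


theorem mem_KstarR_of_pquot_le {Ms : ℕ → ℝ} {x z : ℝ} {N : ℕ} (hx : x ∈ KstarR Ms)
    (hz : Irrational z) (hpre : ∀ i < N, pquot z i = pquot x i) (hN : pquot z N ≤ pquot x N)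
    (htail : ∀ i, N < i → pquot z i = 1) : z ∈ KstarR Ms := by
  refine ⟨hz, fun n => (ENNReal.tsum_le_tsum fun k => ?_).trans (hx.2 n)⟩
  obtain hj | hj | hj := lt_trichotomy (n + k + 1) N
  · rw [brjunoTerm, brjunoTerm, hpre _ hj, ← cden_add_two, ← cden_add_two,
      cden_congr hpre _ (by omega)]
  · have hq : qden z (n + k) = qden x (n + k) := cden_congr hpre (n + k + 2) (by omega)
    have ha := one_le_pquot_succ hz (n + k)
    rw [brjunoTerm, brjunoTerm, hq, hj]
    rw [hj] at ha
    refine ENNReal.ofReal_le_ofReal (div_le_div_of_nonneg_right ?_ ?_)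
    · exact Real.log_le_log (by exact_mod_cast ha) (by exact_mod_cast hN)
    · exact_mod_cast (qden_pos hx.1 _).le
  · simp [brjunoTerm, htail _ hj]

section GoldenTail

open scoped goldenRatio

theorem floor_intCast_add_goldenRatio (c : ℤ) : ⌊(c : ℝ) + φ⌋ = c + 1 := by
  have h1 : (1 : ℤ) ≤ φ := by exact_mod_cast Real.one_lt_goldenRatio.le
  have h2 : φ < (1 : ℤ) + 1 := by push_cast; linarith [Real.goldenRatio_lt_two]
  rw [Int.floor_intCast_add, Int.floor_eq_iff.mpr ⟨h1, h2⟩]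

theorem three_halves_lt_goldenRatio : 3 / 2 < φ := by
  nlinarith [Real.goldenRatio_sq, Real.one_lt_goldenRatio]

theorem complQuot_succ_of_eq_intCast_add_goldenRatio {z : ℝ} {k : ℕ} {c : ℤ}
    (h : complQuot z k = c + φ) : complQuot z (k + 1) = φ := by
  have hfract : (c : ℝ) + φ - ((c + 1 : ℤ) : ℝ) = φ⁻¹ := by
    rw [Real.inv_goldenRatio, ← Real.one_sub_goldenConj]
    push_cast
    ring
  rw [complQuot_succ, h, Int.fract, floor_intCast_add_goldenRatio, hfract, inv_inv]

/-- Replacing the tail of `x` from index `N` on by `c + 1, 1, 1, …` gives a point of `K*`,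
since the Brjuno terms can only decrease (and vanish beyond `N`). -/
theorem mob_add_goldenRatio_mem_KstarR {Ms : ℕ → ℝ} {x : ℝ} (hx : x ∈ KstarR Ms) {N : ℕ}
    {c : ℤ} (hc : N ≠ 0 → 0 ≤ c) (hcN : c + 1 ≤ pquot x N) : mob x N (c + φ) ∈ KstarR Ms := by
  have ht : N ≠ 0 → 1 < (c : ℝ) + φ := fun hN => by
    have : (0 : ℝ) ≤ c := by exact_mod_cast hc hN
    linarith [Real.one_lt_goldenRatio]
  obtain ⟨hN, hpre⟩ := complQuot_mob hx.1 N ht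
  have htail : ∀ j, complQuot (mob x N (c + φ)) (N + j + 1) = φ := by
    intro j
    induction j with
    | zero => exact complQuot_succ_of_eq_intCast_add_goldenRatio hN
    | succ j ih =>
      exact complQuot_succ_of_eq_intCast_add_goldenRatio (c := 0)
        (by rw [← add_assoc, ih, Int.cast_zero, zero_add])
  refine mem_KstarR_of_pquot_le hx ?_ hpre ?_ fun i hi => ?_
  · exact Irrational.of_complQuot (k := N)
      (by rw [hN]; exact Real.goldenRatio_irrational.intCast_add c)
  · rwa [pquot_eq_floor_complQuot, hN, floor_intCast_add_goldenRatio]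
  · obtain ⟨j, rfl⟩ := Nat.exists_eq_add_of_lt hi
    rw [pquot_eq_floor_complQuot, htail, ← zero_add φ, ← Int.cast_zero,
      floor_intCast_add_goldenRatio, zero_add]

end GoldenTail

section CommonConvergent

variable {Ms : ℕ → ℝ} {b₁ b₂ : ℝ} {N : ℕ}

theorem mob_mem_uIoo_of_mem_Ioo_complQuot (hb₁ : Irrational b₁) (hb₂ : Irrational b₂)
    (hpre : ∀ i < N, pquot b₁ i = pquot b₂ i) {t : ℝ}
    (ht : t ∈ Set.Ioo (complQuot b₁ N) (complQuot b₂ N)) : mob b₂ N t ∈ Set.uIoo b₁ b₂ := by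
  have h := mob_mem_uIoo hb₂ (fun hN => zero_lt_one.trans (one_lt_complQuot hb₁ hN)) ht
  rwa [← mob_congr hpre, mob_complQuot hb₁, mob_congr hpre, mob_complQuot hb₂] at h

/-- If `a_N(b₂) ≥ a_N(b₁) + 2`, the point `[a₀; …, a_{N-1}, a_N(b₁) + 1, 1, 1, …]` of `K*` lies
between `b₁` and `b₂`. -/
theorem pquot_eq_add_one_of_uIoo_subset (hb₁ : Irrational b₁) (hb₂ : b₂ ∈ KstarR Ms)
    (hgap : Set.uIoo b₁ b₂ ⊆ (KstarR Ms)ᶜ) (hpre : ∀ i < N, pquot b₁ i = pquot b₂ i)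
    (hlt : pquot b₁ N < pquot b₂ N) : pquot b₂ N = pquot b₁ N + 1 := by
  by_contra hne
  have hA : ((pquot b₁ N : ℤ) : ℝ) + 2 ≤ pquot b₂ N := by exact_mod_cast (by omega : _ ≤ _)
  have hz := mob_add_goldenRatio_mem_KstarR hb₂ (c := pquot b₁ N)
    (fun hN => zero_le_one.trans (one_le_pquot hb₁ hN)) (by omega)
  refine hgap (mob_mem_uIoo_of_mem_Ioo_complQuot hb₁ hb₂.1 hpre ⟨?_, ?_⟩) hz
  · linarith [complQuot_lt_pquot_add_one b₁ N, Real.one_lt_goldenRatio]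
  · linarith [pquot_lt_complQuot hb₂.1 N, Real.goldenRatio_lt_two]

/-- If `a_{N+1}(b₁) ≥ 2` then `x_N(b₁) < a_N(b₁) + 1/2`, and the point
`[a₀; …, a_{N-1}, a_N(b₁), 1, 1, …]` of `K*` lies between `b₁` and `b₂`. -/
theorem pquot_succ_eq_one_of_uIoo_subset (hb₁ : b₁ ∈ KstarR Ms) (hb₂ : Irrational b₂)
    (hgap : Set.uIoo b₁ b₂ ⊆ (KstarR Ms)ᶜ) (hpre : ∀ i < N, pquot b₁ i = pquot b₂ i)
    (hsucc : pquot b₂ N = pquot b₁ N + 1) : pquot b₁ (N + 1) = 1 := by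
  by_contra hne
  have h2 : (2 : ℝ) < complQuot b₁ (N + 1) := by
    have : (2 : ℤ) ≤ pquot b₁ (N + 1) := by have := one_le_pquot_succ hb₁.1 N; omega
    have : (2 : ℝ) ≤ pquot b₁ (N + 1) := by exact_mod_cast this
    linarith [pquot_lt_complQuot hb₁.1 (N + 1)]
  have hhalf : complQuot b₁ N < pquot b₁ N + 1 / 2 := by
    rw [complQuot_eq_pquot_add_inv b₁ N]
    linarith [inv_lt_inv₀ (by linarith) two_pos |>.mpr h2]
  have hz := mob_add_goldenRatio_mem_KstarR hb₁ (c := pquot b₁ N - 1)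
    (fun hN => by linarith [one_le_pquot hb₁.1 hN]) (by omega)
  rw [mob_congr hpre] at hz
  refine hgap (mob_mem_uIoo_of_mem_Ioo_complQuot hb₁.1 hb₂ hpre ⟨?_, ?_⟩) hz
  · push_cast; linarith [three_halves_lt_goldenRatio]
  · have := pquot_lt_complQuot hb₂ N
    rw [hsucc] at this
    push_cast at this ⊢
    linarith [Real.goldenRatio_lt_two]

theorem pnum_succ_eq_of_pquot (hpre : ∀ i < N, pquot b₁ i = pquot b₂ i)
    (hsucc : pquot b₂ N = pquot b₁ N + 1) (hone : pquot b₁ (N + 1) = 1) :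
    pnum b₁ (N + 1) = pnum b₂ N := by
  rw [← cnum_add_two, ← cnum_add_two, cnum_rec, hone, cnum_rec, cnum_rec b₂, hsucc,
    cnum_congr hpre N (by omega), cnum_congr hpre (N + 1) le_rfl]
  ring

theorem qden_succ_eq_of_pquot (hpre : ∀ i < N, pquot b₁ i = pquot b₂ i)
    (hsucc : pquot b₂ N = pquot b₁ N + 1) (hone : pquot b₁ (N + 1) = 1) :
    qden b₁ (N + 1) = qden b₂ N := by
  rw [← cden_add_two, ← cden_add_two, cden_rec, hone, cden_rec, cden_rec b₂, hsucc,
    cden_congr hpre N (by omega), cden_congr hpre (N + 1) le_rfl]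
  ring

/-- The two expansions read `[a₀; …, a_{N-1}, A, 1, …]` and `[a₀; …, a_{N-1}, A + 1, …]`, and
`[a₀; …, a_{N-1}, A + 1]` is a convergent of both. -/
theorem exists_common_convergent (hb₁ : b₁ ∈ KstarR Ms) (hb₂ : b₂ ∈ KstarR Ms)
    (hgap : Set.uIoo b₁ b₂ ⊆ (KstarR Ms)ᶜ) (hpre : ∀ i < N, pquot b₁ i = pquot b₂ i)
    (hlt : pquot b₁ N < pquot b₂ N) :
    ∃ r : ℚ, (r : ℝ) ∈ Set.uIoo b₁ b₂ ∧ (r : ℝ) = pnum b₁ (N + 1) / qden b₁ (N + 1) ∧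
      (r : ℝ) = pnum b₂ N / qden b₂ N := by
  have hsucc := pquot_eq_add_one_of_uIoo_subset hb₁.1 hb₂ hgap hpre hlt
  have hone := pquot_succ_eq_one_of_uIoo_subset hb₁ hb₂.1 hgap hpre hsucc
  have hr : (((pnum b₂ N / qden b₂ N : ℚ)) : ℝ) = pnum b₂ N / qden b₂ N := by push_cast; ring
  refine ⟨pnum b₂ N / qden b₂ N, ?_, ?_, hr⟩
  · rw [hr, ← mob_pquot]
    refine mob_mem_uIoo_of_mem_Ioo_complQuot hb₁.1 hb₂.1 hpre ⟨?_, pquot_lt_complQuot hb₂.1 N⟩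
    rw [hsucc]
    exact_mod_cast complQuot_lt_pquot_add_one b₁ N
  · rw [hr, pnum_succ_eq_of_pquot hpre hsucc hone, qden_succ_eq_of_pquot hpre hsucc hone]

end CommonConvergent

theorem exists_common_convergent_of_Ioo_subset {Ms : ℕ → ℝ} {αm αp : ℝ} (hlt : αm < αp)
    (hm : αm ∈ KstarR Ms) (hp : αp ∈ KstarR Ms) (hgap : Set.Ioo αm αp ⊆ (KstarR Ms)ᶜ) :
    ∃ r : ℚ, (r : ℝ) ∈ Set.Ioo αm αp ∧ (∃ n, (r : ℝ) = pnum αm n / qden αm n) ∧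
      ∃ n, (r : ℝ) = pnum αp n / qden αp n := by
  have hdiff : ∃ k, pquot αm k ≠ pquot αp k := by
    by_contra! h
    exact hlt.ne (eq_of_forall_pquot_eq hm.1 hp.1 h)
  have hpre : ∀ i < Nat.find hdiff, pquot αm i = pquot αp i := fun i hi =>
    not_not.mp (Nat.find_min hdiff hi)
  rw [← Set.uIoo_of_lt hlt] at hgap ⊢
  rcases (Nat.find_spec hdiff).lt_or_gt with h | h
  · obtain ⟨r, hr, hrm, hrp⟩ := exists_common_convergent hm hp hgap hpre h
    exact ⟨r, hr, ⟨_, hrm⟩, _, hrp⟩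
  · rw [Set.uIoo_comm] at hgap ⊢
    obtain ⟨r, hr, hrp, hrm⟩ :=
      exists_common_convergent hp hm hgap (fun i hi => (hpre i hi).symm) h
    exact ⟨r, hr, ⟨_, hrm⟩, _, hrp⟩

theorem den_lt_den_of_common_convergent {αm αp : ℝ} (hm : Irrational αm) (hp : Irrational αp)
    {r : ℚ} (hr : (r : ℝ) ∈ Set.Ioo αm αp) (hrm : ∃ n, (r : ℝ) = pnum αm n / qden αm n)
    (hrp : ∃ n, (r : ℝ) = pnum αp n / qden αp n) {s : ℚ} (hs : (s : ℝ) ∈ Set.Ioo αm αp)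
    (hsr : s ≠ r) : r.den < s.den := by
  rcases (Rat.cast_injective.ne hsr : (s : ℝ) ≠ r).lt_or_gt with h | h
  · obtain ⟨n, hn⟩ := hrm
    have := qden_lt_den_of_mem_uIoo hm (n := n) (s := s)
      (by rw [← hn, Set.uIoo_of_lt hr.1]; exact ⟨hs.1, h⟩)
    have := den_eq_qden_of_eq hm hn
    omega
  · obtain ⟨n, hn⟩ := hrp
    have := qden_lt_den_of_mem_uIoo hp (n := n) (s := s)
      (by rw [← hn, Set.uIoo_comm, Set.uIoo_of_lt hr.2]; exact ⟨h, hs.2⟩)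
    have := den_eq_qden_of_eq hp hn
    omega

theorem notMem_of_connectedComponentIn_eq_Ioo {α : Type*} [ConditionallyCompleteLinearOrder α]
    [TopologicalSpace α] [OrderTopology α] [DenselyOrdered α] {A : Set α} {x a b : α}
    (hx : x ∈ A) (h : connectedComponentIn A x = Set.Ioo a b) : a ∉ A ∧ b ∉ A := by
  have hxI : x ∈ Set.Ioo a b := h ▸ mem_connectedComponentIn hx
  have hsub : Set.Ioo a b ⊆ A := h ▸ connectedComponentIn_subset A x
  constructor
  · intro ha
    have : Set.Ico a b ⊆ connectedComponentIn A x :=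
      isPreconnected_Ico.subset_connectedComponentIn ⟨hxI.1.le, hxI.2⟩
        fun z hz => hz.1.eq_or_lt.elim (· ▸ ha) fun hlt => hsub ⟨hlt, hz.2⟩
    exact (h ▸ this ⟨le_rfl, hxI.1.trans hxI.2⟩).1.false
  · intro hb
    have : Set.Ioc a b ⊆ connectedComponentIn A x :=
      isPreconnected_Ioc.subset_connectedComponentIn ⟨hxI.1, hxI.2.le⟩
        fun z hz => hz.2.eq_or_lt.elim (· ▸ hb) fun hlt => hsub ⟨hz.1, hlt⟩
    exact (h ▸ this ⟨hxI.1.trans hxI.2, le_rfl⟩).2.false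

theorem statement16_general (Ms : ℕ → ℝ)
    (αm αp : ℝ)
    (hcomp : ∃ x ∈ (KstarR Ms)ᶜ,
      connectedComponentIn (KstarR Ms)ᶜ x = Set.Ioo αm αp) :
    (∃! r : ℚ, (αm < (r : ℝ) ∧ (r : ℝ) < αp) ∧
      (∃ n : ℕ, (r : ℝ) = (pnum αm n : ℝ) / (qden αm n : ℝ)) ∧
      (∃ n : ℕ, (r : ℝ) = (pnum αp n : ℝ) / (qden αp n : ℝ))) ∧
    (∀ r : ℚ, (αm < (r : ℝ) ∧ (r : ℝ) < αp) →
      (∃ n : ℕ, (r : ℝ) = (pnum αm n : ℝ) / (qden αm n : ℝ)) →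
      (∃ n : ℕ, (r : ℝ) = (pnum αp n : ℝ) / (qden αp n : ℝ)) →
      ∀ s : ℚ, αm < (s : ℝ) → (s : ℝ) < αp → s ≠ r → r.den < s.den) := by
  obtain ⟨x, hx, hconn⟩ := hcomp
  have hxI : x ∈ Set.Ioo αm αp := hconn ▸ mem_connectedComponentIn hx
  have hgap : Set.Ioo αm αp ⊆ (KstarR Ms)ᶜ := hconn ▸ connectedComponentIn_subset _ x
  obtain ⟨hm, hp⟩ := notMem_of_connectedComponentIn_eq_Ioo hx hconn
  rw [Set.notMem_compl_iff] at hm hp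
  have hmin := @den_lt_den_of_common_convergent αm αp hm.1 hp.1
  obtain ⟨r₀, hr₀, hr₀m, hr₀p⟩ :=
    exists_common_convergent_of_Ioo_subset (hxI.1.trans hxI.2) hm hp hgap
  refine ⟨⟨r₀, ⟨hr₀, hr₀m, hr₀p⟩, fun r ⟨hr, hrm, hrp⟩ => ?_⟩,
    fun r hr hrm hrp s hs₁ hs₂ hsr => hmin hr hrm hrp ⟨hs₁, hs₂⟩ hsr⟩
  by_contra hne
  have := hmin hr hrm hrp hr₀ (Ne.symm hne)
  have := hmin hr₀ hr₀m hr₀p hr hne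
  omega

/-- each bounded connected component of `A* = ℝ \ K*` contains exactly
one rational which is a convergent of both endpoints, and this common convergent is
the rational of strictly least reduced denominator of the component. -/
theorem statement16 (Ms : ℕ → ℝ) (hMpos : ∀ n, 0 < Ms n) (hMdec : Antitone Ms)
    (hMlim : Filter.Tendsto Ms Filter.atTop (nhds 0))
    (αm αp : ℝ)
    (hcomp : ∃ x ∈ (KstarR Ms)ᶜ,
      connectedComponentIn (KstarR Ms)ᶜ x = Set.Ioo αm αp) :
    (∃! r : ℚ, (αm < (r : ℝ) ∧ (r : ℝ) < αp) ∧
      (∃ n : ℕ, (r : ℝ) = (pnum αm n : ℝ) / (qden αm n : ℝ)) ∧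
      (∃ n : ℕ, (r : ℝ) = (pnum αp n : ℝ) / (qden αp n : ℝ))) ∧
    (∀ r : ℚ, (αm < (r : ℝ) ∧ (r : ℝ) < αp) →
      (∃ n : ℕ, (r : ℝ) = (pnum αm n : ℝ) / (qden αm n : ℝ)) →
      (∃ n : ℕ, (r : ℝ) = (pnum αp n : ℝ) / (qden αp n : ℝ)) →
      ∀ s : ℚ, αm < (s : ℝ) → (s : ℝ) < αp → s ≠ r → r.den < s.den) :=
  statement16_general Ms αm αp hcomp
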